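/- arXiv:1001.4588 — 2 statements merged into one kernel-verified Lean document; each statement's English description precedes it below -/
import Mathlib

section
/- Let the three-user-pair deterministic interference channel be fixed. Define the treating-interference-as-noise region ℛ_TIN as the set of all triples (R₁,R₂,R₃) of nonnegative reals for which there exists an admissible input (Q,X₁,X₂,X₃) such that R_k < I(X_k;Y_k|Q) for k = 1,2,3. Define the interference-decoding region ℛ_ID as the set of all triples (R₁,R₂,R₃) of nonnegative reals for which there exists an admissible input (Q,X₁,X₂,X₃) such that all of the following twelve inequalities hold: (receiver 1) R₁ < H(X₁₁|Q); R₁ + min{R₂, H(X₂₁|Q)} < H(Y₁|X₃₁,Q); R₁ + min{R₃, H(X₃₁|Q)} < H(Y₁|X₂₁,Q); R₁ + min{R₂+R₃, R₂+H(X₃₁|Q), H(X₂₁|Q)+R₃, H(S₁|Q)} < H(Y₁|Q); (receiver 2) R₂ < H(X₂₂|Q); R₂ + min{R₃, H(X₃₂|Q)} < H(Y₂|X₁₂,Q); R₂ + min{R₁, H(X₁₂|Q)} < H(Y₂|X₃₂,Q); R₂ + min{R₃+R₁, R₃+H(X₁₂|Q), H(X₃₂|Q)+R₁, H(S₂|Q)}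 < H(Y₂|Q); (receiver 3) R₃ < H(X₃₃|Q); R₃ + min{R₁, H(X₁₃|Q)} < H(Y₃|X₂₃,Q); R₃ + min{R₂, H(X₂₃|Q)} < H(Y₃|X₁₃,Q); R₃ + min{R₁+R₂, R₁+H(X₂₃|Q), H(X₁₃|Q)+R₂, H(S₃|Q)} < H(Y₃|Q). Then ℛ_TIN ⊆ ℛ_ID. -/
open scoped Classical
open Finset

/-- A probability mass function on a finite sample space, given as a real-valued
weight function that is nonnegative and sums to one. -/
structure FinPMF (Ω : Type) where
  [fin : Fintype Ω]
  p : Ω → ℝ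
  nonneg : ∀ ω, 0 ≤ p ω
  sum_one : ∑ ω, p ω = 1

/-- Probability of an event. -/
noncomputable def prE {Ω : Type} (μ : FinPMF Ω) (E : Ω → Prop) : ℝ :=
  letI := μ.fin
  ∑ ω, if E ω then μ.p ω else 0

/-- Probability that the random variable `X` takes the value `x`. -/
noncomputable def prX {Ω α : Type} (μ : FinPMF Ω) (X : Ω → α) (x : α) : ℝ :=
  prE μ (fun ω => X ω = x)

/-- Shannon entropy (base 2) of a random variable on a finite probability space. -/
noncomputable def entH {Ω α : Type} (μ : FinPMF Ω) (X : Ω → α) : ℝ :=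
  letI := μ.fin;
  -∑ x ∈ Finset.univ.image X, prX μ X x * Real.logb 2 (prX μ X x)

/-- Conditional entropy `H(X | Y)` (base 2). -/
noncomputable def condH {Ω α β : Type} (μ : FinPMF Ω) (X : Ω → α) (Y : Ω → β) : ℝ :=
  entH μ (fun ω => (X ω, Y ω)) - entH μ Y

/-- Conditional mutual information `I(X ; Y | Q)` (base 2). -/
noncomputable def condMI {Ω α β γ : Type} (μ : FinPMF Ω) (X : Ω → α) (Y : Ω → β)
    (Q : Ω → γ) : ℝ :=
  condH μ X Q + condH μ Y Q - condH μ (fun ω => (X ω, Y ω)) Q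

/-- A two-argument function is one-to-one in each argument. -/
def OneToOne {A B C : Type} (f : A → B → C) : Prop :=
  (∀ b, Function.Injective fun a => f a b) ∧ ∀ a, Function.Injective (f a)

/-- Conditional pmf `p_{X|U}(x|u)`. -/
noncomputable def condP {Ω α γ : Type} (μ : FinPMF Ω) (X : Ω → α) (U : Ω → γ)
    (x : α) (u : γ) : ℝ :=
  prE μ (fun ω => X ω = x ∧ U ω = u) / prX μ U u

/-- Independence of two random variables. -/
def IndepFun {Ω α β : Type} (μ : FinPMF Ω) (X : Ω → α) (S : Ω → β) : Prop :=
  ∀ x s, prE μ (fun ω => X ω = x ∧ S ω = s) = prX μ X x * prX μ S s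

/-- Conditional independence of `A` and `B` given `Z`:
for every `z` with `P(Z = z) > 0`, `P(A = a, B = b | Z = z) = P(A = a | Z = z) P(B = b | Z = z)`. -/
def CondIndepFun {Ω α β γ : Type} (μ : FinPMF Ω) (A : Ω → α) (B : Ω → β) (Z : Ω → γ) : Prop :=
  ∀ a b z, 0 < prX μ Z z →
    prE μ (fun ω => A ω = a ∧ B ω = b ∧ Z ω = z) / prX μ Z z =
      (prE μ (fun ω => A ω = a ∧ Z ω = z) / prX μ Z z) *
        (prE μ (fun ω => B ω = b ∧ Z ω = z) / prX μ Z z)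

/-- Mutual conditional independence of `X₁, X₂, X₃` given `Q`: the joint conditional pmf
factors into the product of the conditional marginals. -/
def CondIndepFun3 {Ω α₁ α₂ α₃ γ : Type} (μ : FinPMF Ω)
    (X₁ : Ω → α₁) (X₂ : Ω → α₂) (X₃ : Ω → α₃) (Q : Ω → γ) : Prop :=
  ∀ x₁ x₂ x₃ q, 0 < prX μ Q q →
    prE μ (fun ω => X₁ ω = x₁ ∧ X₂ ω = x₂ ∧ X₃ ω = x₃ ∧ Q ω = q) / prX μ Q q =
      (prE μ (fun ω => X₁ ω = x₁ ∧ Q ω = q) / prX μ Q q) *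
        (prE μ (fun ω => X₂ ω = x₂ ∧ Q ω = q) / prX μ Q q) *
        (prE μ (fun ω => X₃ ω = x₃ ∧ Q ω = q) / prX μ Q q)

/-- The ε-typical set (sequences whose empirical pmf is within a relative ε of `p`). -/
def Typical {𝒳 : Type} [Fintype 𝒳] (p : 𝒳 → ℝ) (ε : ℝ) (n : ℕ) (xs : Fin n → 𝒳) : Prop :=
  ∀ x : 𝒳, |((Finset.univ.filter fun i => xs i = x).card : ℝ) / n - p x| ≤ ε * p x

/-- The number of codewords `⌈2^{nR}⌉` at rate `R` and blocklength `n`. -/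
noncomputable def codeSize (R : ℝ) (n : ℕ) : ℕ := ⌈(2 : ℝ) ^ ((n : ℝ) * R)⌉₊

/-!
Every bound of the interference-decoding region at receiver `k` is a single-letter inequality
for `I(X_k; Y_k | Q)`. Mutual conditional independence enters only through
`I(X_k; (X_l, X_m) | Q) = 0`. Since `f_k` is injective in its second argument, given `X_k`
the output `Y_k` and the interference `S_k` determine each other, and `S_k` is independent of
`X_k`; hence `I(X_k; Y_k | Q) = H(Y_k | Q) - H(S_k | Q)`, which gives the bound involving
`H(S_k | Q)` and, by subadditivity, `R_k < H(X_kk | Q)`. For the bounds conditioned on one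
interferer `X_lk`, independence shows that conditioning on `X_lk` does not decrease
`I(X_k; Y_k | Q)`, and given `X_k` and `X_lk` the output determines the other interferer
because `h_k` is injective in each argument. All of this rests on the nonnegativity of
conditional mutual information.
-/

section

variable {Ω α β γ δ ε : Type}

lemma prE_nonneg (μ : FinPMF Ω) (E : Ω → Prop) : 0 ≤ prE μ E := by
  let _ : Fintype Ω := μ.fin
  exact sum_nonneg fun ω _ => by split_ifs <;> simp [μ.nonneg]

lemma prE_mono (μ : FinPMF Ω) {E F : Ω → Prop} (h : ∀ ω, E ω → F ω) : prE μ E ≤ prE μ F := by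
  let _ : Fintype Ω := μ.fin
  refine sum_le_sum fun ω _ => ?_
  by_cases hE : E ω
  · simp [hE, h ω hE]
  · simp only [hE, if_false]; split_ifs <;> simp [μ.nonneg]

namespace FinPMF

variable (μ : FinPMF Ω)

lemma p_le_prX (X : Ω → α) (ω : Ω) : μ.p ω ≤ prX μ X (X ω) := by
  let _ : Fintype Ω := μ.fin
  have := single_le_sum (f := fun ω' => if X ω' = X ω then μ.p ω' else 0)
    (fun ω' _ => by split_ifs <;> simp [μ.nonneg]) (mem_univ ω)
  rwa [if_pos rfl] at this

lemma prX_pos (X : Ω → α) {ω : Ω} (hω : 0 < μ.p ω) : 0 < prX μ X (X ω) :=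
  hω.trans_le (μ.p_le_prX X ω)

noncomputable def expect (f : Ω → ℝ) : ℝ :=
  letI := μ.fin
  ∑ ω, μ.p ω * f ω

lemma expect_congr {f g : Ω → ℝ} (h : ∀ ω, 0 < μ.p ω → f ω = g ω) :
    μ.expect f = μ.expect g := by
  let _ : Fintype Ω := μ.fin
  refine sum_congr rfl fun ω _ => ?_
  rcases (μ.nonneg ω).eq_or_lt with h0 | h0
  · simp [← h0]
  · rw [h ω h0]

lemma expect_mono {f g : Ω → ℝ} (h : ∀ ω, 0 < μ.p ω → f ω ≤ g ω) :
    μ.expect f ≤ μ.expect g := by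
  let _ : Fintype Ω := μ.fin
  refine sum_le_sum fun ω _ => ?_
  rcases (μ.nonneg ω).eq_or_lt with h0 | h0
  · simp [← h0]
  · exact mul_le_mul_of_nonneg_left (h ω h0) h0.le

lemma expect_zero : μ.expect (fun _ => 0) = 0 := by
  simp [expect]

lemma expect_one : μ.expect (fun _ => 1) = 1 := by
  simpa [expect] using μ.sum_one

lemma prE_eq_expect (E : Ω → Prop) : prE μ E = μ.expect fun ω => if E ω then 1 else 0 := by
  let _ : Fintype Ω := μ.fin
  exact sum_congr rfl fun ω _ => by by_cases h : E ω <;> simp [h]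

lemma expect_ite_const (E : Ω → Prop) [DecidablePred E] (c : ℝ) :
    μ.expect (fun ω => if E ω then c else 0) = prE μ E * c := by
  let _ : Fintype Ω := μ.fin
  rw [prE_eq_expect, expect, expect, sum_mul]
  exact sum_congr rfl fun ω _ => by split_ifs <;> simp

lemma expect_mul_expect (f g : Ω → ℝ) :
    μ.expect f * μ.expect g = μ.expect fun ω => μ.expect fun ω' => f ω * g ω' := by
  let _ : Fintype Ω := μ.fin
  rw [expect, expect, expect, sum_mul_sum]
  exact sum_congr rfl fun _ _ => by
    rw [expect, mul_sum]; exact sum_congr rfl fun _ _ => by ring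

lemma expect_mul_const (f : Ω → ℝ) (c : ℝ) :
    μ.expect (fun ω => f ω * c) = μ.expect f * c := by
  let _ : Fintype Ω := μ.fin
  simp only [expect, sum_mul, mul_assoc]

lemma expect_sub (f g : Ω → ℝ) :
    μ.expect (fun ω => f ω - g ω) = μ.expect f - μ.expect g := by
  let _ : Fintype Ω := μ.fin
  simp only [expect, mul_sub, sum_sub_distrib]

lemma expect_comm (f : Ω → Ω → ℝ) :
    (μ.expect fun ω => μ.expect (f ω)) = μ.expect fun ω' => μ.expect fun ω => f ω ω' := by
  let _ : Fintype Ω := μ.fin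
  simp only [expect, mul_sum]
  rw [sum_comm]
  exact sum_congr rfl fun _ _ => sum_congr rfl fun _ _ => by ring

end FinPMF

lemma entH_eq_neg_expect (μ : FinPMF Ω) (X : Ω → α) :
    entH μ X = -μ.expect fun ω => Real.logb 2 (prX μ X (X ω)) := by
  let _ : Fintype Ω := μ.fin
  rw [entH, FinPMF.expect, ← sum_fiberwise_of_maps_to (g := X) (t := univ.image X)
    fun ω _ => mem_image_of_mem X (mem_univ ω)]
  congr 1
  refine sum_congr rfl fun x _ => ?_
  rw [prX, prE, ← sum_filter, sum_mul]
  exact sum_congr rfl fun ω hω => by rw [(mem_filter.mp hω).2, prX, prE, sum_filter]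

def Determines (X : Ω → α) (Y : Ω → β) : Prop :=
  ∀ ω ω', X ω = X ω' → Y ω = Y ω'

lemma entH_le_of_determines (μ : FinPMF Ω) {X : Ω → α} {Y : Ω → β} (h : Determines X Y) :
    entH μ Y ≤ entH μ X := by
  rw [entH_eq_neg_expect, entH_eq_neg_expect, neg_le_neg_iff]
  refine μ.expect_mono fun ω hω => Real.logb_le_logb_of_le one_lt_two (μ.prX_pos X hω) ?_
  exact prE_mono μ fun ω' => h ω' ω

lemma entH_congr (μ : FinPMF Ω) {X : Ω → α} {Y : Ω → β} (hXY : Determines X Y)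
    (hYX : Determines Y X) : entH μ X = entH μ Y :=
  (entH_le_of_determines μ hYX).antisymm (entH_le_of_determines μ hXY)

lemma condH_le_of_determines (μ : FinPMF Ω) {Y : Ω → α} {V : Ω → β} {W : Ω → γ}
    (h : Determines (fun ω => (Y ω, W ω)) V) : condH μ V W ≤ condH μ Y W := by
  have := entH_le_of_determines μ (X := fun ω => (Y ω, W ω)) (Y := fun ω => (V ω, W ω))
    fun ω ω' hω => Prod.ext (h ω ω' hω) (Prod.ext_iff.mp hω).2
  simp only [condH]
  linarith

lemma condH_eq_of_determines (μ : FinPMF Ω) {Y : Ω → α} {V : Ω → β} {W : Ω → γ}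
    (hYV : Determines (fun ω => (Y ω, W ω)) V) (hVY : Determines (fun ω => (V ω, W ω)) Y) :
    condH μ V W = condH μ Y W :=
  (condH_le_of_determines μ hYV).antisymm (condH_le_of_determines μ hVY)

lemma condMI_comm (μ : FinPMF Ω) (X : Ω → α) (Y : Ω → β) (Z : Ω → γ) :
    condMI μ X Y Z = condMI μ Y X Z := by
  have : entH μ (fun ω => ((X ω, Y ω), Z ω)) = entH μ (fun ω => ((Y ω, X ω), Z ω)) :=
    entH_congr μ (fun _ _ h => by simp_all) (fun _ _ h => by simp_all)
  simp only [condMI, condH]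
  linarith

lemma condMI_eq_condH_sub_condH (μ : FinPMF Ω) (X : Ω → α) (Y : Ω → β) (Z : Ω → γ) :
    condMI μ X Y Z = condH μ Y Z - condH μ Y (fun ω => (X ω, Z ω)) := by
  have : entH μ (fun ω => ((X ω, Y ω), Z ω)) = entH μ (fun ω => (Y ω, (X ω, Z ω))) :=
    entH_congr μ (fun _ _ h => by simp_all) (fun _ _ h => by simp_all)
  simp only [condMI, condH]
  linarith

lemma condMI_pair_eq_add (μ : FinPMF Ω) (X : Ω → α) (Y : Ω → β) (W : Ω → δ) (Z : Ω → γ) :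
    condMI μ X (fun ω => (Y ω, W ω)) Z =
      condMI μ X Y Z + condMI μ X W (fun ω => (Y ω, Z ω)) := by
  have e₁ : entH μ (fun ω => (X ω, (Y ω, Z ω))) = entH μ (fun ω => ((X ω, Y ω), Z ω)) :=
    entH_congr μ (fun _ _ h => by simp_all) (fun _ _ h => by simp_all)
  have e₂ : entH μ (fun ω => (W ω, (Y ω, Z ω))) = entH μ (fun ω => ((Y ω, W ω), Z ω)) :=
    entH_congr μ (fun _ _ h => by simp_all) (fun _ _ h => by simp_all)
  have e₃ : entH μ (fun ω => ((X ω, W ω), (Y ω, Z ω))) =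
      entH μ (fun ω => ((X ω, (Y ω, W ω)), Z ω)) :=
    entH_congr μ (fun _ _ h => by simp_all) (fun _ _ h => by simp_all)
  simp only [condMI, condH]
  linarith

noncomputable def condIndepRatio (μ : FinPMF Ω) (X : Ω → α) (Y : Ω → β) (Z : Ω → γ)
    (ω : Ω) : ℝ :=
  prX μ (fun ω => (X ω, Z ω)) (X ω, Z ω) * prX μ (fun ω => (Y ω, Z ω)) (Y ω, Z ω) /
    (prX μ (fun ω => ((X ω, Y ω), Z ω)) ((X ω, Y ω), Z ω) * prX μ Z (Z ω))

/-- Couple two independent samples `ω₁, ω₂` on the event `Z ω₁ = Z ω₂`: the triple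
`(X ω₁, Y ω₂, Z ω₁)` has law `p(x | z) p(y | z) p(z)`, whose total mass bounds the expectation. -/
lemma expect_condIndepRatio_le_one (μ : FinPMF Ω) (X : Ω → α) (Y : Ω → β) (Z : Ω → γ) :
    μ.expect (condIndepRatio μ X Y Z) ≤ 1 := by
  set W := fun ω => ((X ω, Y ω), Z ω)
  set z := fun ω => prX μ Z (Z ω)
  set F : Ω → Ω → Ω → ℝ := fun ω ω₁ ω₂ =>
    if (X ω₁, Z ω₁) = (X ω, Z ω) ∧ (Y ω₂, Z ω₂) = (Y ω, Z ω)
    then (prX μ W (W ω) * z ω)⁻¹ else 0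
  have h_ratio : ∀ ω, condIndepRatio μ X Y Z ω =
      μ.expect fun ω₁ => μ.expect fun ω₂ => F ω ω₁ ω₂ := by
    intro ω
    rw [condIndepRatio, div_eq_mul_inv, prX, prX, μ.prE_eq_expect, μ.prE_eq_expect,
      μ.expect_mul_expect, ← μ.expect_mul_const]
    congr 1; funext ω₁
    rw [← μ.expect_mul_const]
    congr 1; funext ω₂
    by_cases h₁ : (X ω₁, Z ω₁) = (X ω, Z ω) <;> by_cases h₂ : (Y ω₂, Z ω₂) = (Y ω, Z ω) <;>
      simp only [F, h₁, h₂, and_self, and_false, false_and, if_true, if_false, one_mul, mul_one,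
        mul_zero, zero_mul]
    rfl
  have h_inner : ∀ ω₁ ω₂, (μ.expect fun ω => F ω ω₁ ω₂) ≤
      if Z ω₂ = Z ω₁ then (z ω₁)⁻¹ else 0 := by
    intro ω₁ ω₂
    by_cases hz : Z ω₂ = Z ω₁
    · set t := ((X ω₁, Y ω₂), Z ω₁)
      have hF : ∀ ω, F ω ω₁ ω₂ = if W ω = t then (prX μ W t * z ω₁)⁻¹ else 0 := by
        intro ω
        by_cases hω : W ω = t
        · simp only [W, t, Prod.mk.injEq] at hω
          simp [F, W, z, t, hω, hz]
        · refine (if_neg fun h => hω ?_).trans (if_neg hω).symm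
          simp only [W, t, Prod.mk.injEq] at h ⊢
          exact ⟨⟨h.1.1.symm, h.2.1.symm⟩, h.1.2.symm⟩
      rw [if_pos hz, funext hF, μ.expect_ite_const, mul_inv, ← mul_assoc]
      exact mul_le_of_le_one_left (inv_nonneg.mpr (prE_nonneg μ _)) (div_self_le_one _)
    · rw [if_neg hz, ← μ.expect_zero]
      refine le_of_eq (congrArg μ.expect (funext fun ω => if_neg fun h => hz ?_))
      simp only [Prod.mk.injEq] at h
      rw [h.1.2, h.2.2]
  have h_outer : ∀ ω₁, 0 < μ.p ω₁ →
      (μ.expect fun ω₂ => if Z ω₂ = Z ω₁ then (z ω₁)⁻¹ else 0) = 1 := fun ω₁ hω₁ => by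
    rw [μ.expect_ite_const]
    exact mul_inv_cancel₀ (μ.prX_pos Z hω₁).ne'
  calc μ.expect (condIndepRatio μ X Y Z)
      = μ.expect fun ω₁ => μ.expect fun ω₂ => μ.expect fun ω => F ω ω₁ ω₂ := by
        rw [funext h_ratio, μ.expect_comm]
        exact congrArg μ.expect (funext fun ω₁ => μ.expect_comm _)
    _ ≤ μ.expect fun ω₁ => μ.expect fun ω₂ => if Z ω₂ = Z ω₁ then (z ω₁)⁻¹ else 0 :=
        μ.expect_mono fun ω₁ _ => μ.expect_mono fun ω₂ _ => h_inner ω₁ ω₂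
    _ = 1 := by rw [μ.expect_congr h_outer, μ.expect_one]

lemma condMI_eq_neg_expect_logb (μ : FinPMF Ω) (X : Ω → α) (Y : Ω → β) (Z : Ω → γ) :
    condMI μ X Y Z = -μ.expect fun ω => Real.logb 2 (condIndepRatio μ X Y Z ω) := by
  have h_log : ∀ ω, 0 < μ.p ω → Real.logb 2 (condIndepRatio μ X Y Z ω) =
      Real.logb 2 (prX μ (fun ω => (X ω, Z ω)) (X ω, Z ω))
        + Real.logb 2 (prX μ (fun ω => (Y ω, Z ω)) (Y ω, Z ω))
        - Real.logb 2 (prX μ (fun ω => ((X ω, Y ω), Z ω)) ((X ω, Y ω), Z ω))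
        - Real.logb 2 (prX μ Z (Z ω)) := fun ω hω => by
    have hXZ := μ.prX_pos (fun ω => (X ω, Z ω)) hω
    have hYZ := μ.prX_pos (fun ω => (Y ω, Z ω)) hω
    have hW := μ.prX_pos (fun ω => ((X ω, Y ω), Z ω)) hω
    have hZ := μ.prX_pos Z hω
    rw [condIndepRatio, Real.logb_div (mul_pos hXZ hYZ).ne' (mul_pos hW hZ).ne',
      Real.logb_mul hXZ.ne' hYZ.ne', Real.logb_mul hW.ne' hZ.ne', sub_sub]
  rw [μ.expect_congr h_log]
  let _ : Fintype Ω := μ.fin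
  simp only [condMI, condH, entH_eq_neg_expect, FinPMF.expect, mul_sub, mul_add,
    sum_sub_distrib, sum_add_distrib]
  ring

lemma condMI_nonneg (μ : FinPMF Ω) (X : Ω → α) (Y : Ω → β) (Z : Ω → γ) :
    0 ≤ condMI μ X Y Z := by
  set r := condIndepRatio μ X Y Z
  have h_pt : ∀ ω, 0 < μ.p ω → Real.logb 2 (r ω) ≤ (r ω - 1) * (Real.log 2)⁻¹ := by
    intro ω hω
    have hr : 0 < r ω := div_pos (mul_pos (μ.prX_pos _ hω) (μ.prX_pos _ hω))
      (mul_pos (μ.prX_pos _ hω) (μ.prX_pos _ hω))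
    exact mul_le_mul_of_nonneg_right (Real.log_le_sub_one_of_pos hr)
      (inv_nonneg.mpr (Real.log_pos one_lt_two).le)
  have h_sub : μ.expect (fun ω => (r ω - 1) * (Real.log 2)⁻¹) ≤ 0 := by
    rw [μ.expect_mul_const, μ.expect_sub, μ.expect_one]
    exact mul_nonpos_of_nonpos_of_nonneg (by linarith [expect_condIndepRatio_le_one μ X Y Z])
      (inv_nonneg.mpr (Real.log_pos one_lt_two).le)
  rw [condMI_eq_neg_expect_logb]
  linarith [μ.expect_mono h_pt]

lemma condH_pair_le_add (μ : FinPMF Ω) (X : Ω → α) (Y : Ω → β) (Z : Ω → γ) :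
    condH μ (fun ω => (X ω, Y ω)) Z ≤ condH μ X Z + condH μ Y Z := by
  have := condMI_nonneg μ X Y Z
  rw [condMI] at this
  linarith

lemma condMI_congr_right (μ : FinPMF Ω) (X : Ω → α) {Y : Ω → β} {Y' : Ω → δ} (Z : Ω → γ)
    (h : Determines Y Y') (h' : Determines Y' Y) : condMI μ X Y Z = condMI μ X Y' Z := by
  have e₁ : entH μ (fun ω => (Y ω, Z ω)) = entH μ (fun ω => (Y' ω, Z ω)) :=
    entH_congr μ (fun ω ω' hω => by simp_all [h ω ω']) (fun ω ω' hω => by simp_all [h' ω ω'])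
  have e₂ : entH μ (fun ω => ((X ω, Y ω), Z ω)) = entH μ (fun ω => ((X ω, Y' ω), Z ω)) :=
    entH_congr μ (fun ω ω' hω => by simp_all [h ω ω']) (fun ω ω' hω => by simp_all [h' ω ω'])
  simp only [condMI, condH]
  linarith

lemma condMI_le_of_determines (μ : FinPMF Ω) (X : Ω → α) {Y : Ω → β} {Y' : Ω → δ}
    (Z : Ω → γ) (h : Determines Y Y') : condMI μ X Y' Z ≤ condMI μ X Y Z := by
  have h_chain := condMI_pair_eq_add μ X Y' Y Z
  rw [← condMI_congr_right μ X Z (fun ω ω' hω => Prod.ext (h ω ω' hω) hω)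
    (fun ω ω' hω => (Prod.ext_iff.mp hω).2)] at h_chain
  linarith [condMI_nonneg μ X Y (fun ω => (Y' ω, Z ω))]

lemma condMI_eq_zero_of_determines (μ : FinPMF Ω) {X : Ω → α} {Y : Ω → β} {X' : Ω → γ}
    {Y' : Ω → δ} {Z : Ω → ε} (h : condMI μ X Y Z = 0) (hX : Determines X X')
    (hY : Determines Y Y') : condMI μ X' Y' Z = 0 := by
  have h₁ := condMI_le_of_determines μ X Z hY
  have h₂ := condMI_le_of_determines μ Y' Z hX
  rw [condMI_comm μ Y', condMI_comm μ Y'] at h₂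
  linarith [condMI_nonneg μ X' Y' Z]

lemma condH_cond_eq_of_condMI_eq_zero (μ : FinPMF Ω) {X : Ω → α} {Y : Ω → β} {Z : Ω → γ}
    (h : condMI μ X Y Z = 0) : condH μ Y (fun ω => (X ω, Z ω)) = condH μ Y Z := by
  linarith [condMI_eq_condH_sub_condH μ X Y Z]

lemma condMI_le_condMI_cond_of_condMI_eq_zero (μ : FinPMF Ω) {X : Ω → α} (Y : Ω → β)
    {W : Ω → δ} {Z : Ω → γ} (h : condMI μ X W Z = 0) :
    condMI μ X Y Z ≤ condMI μ X Y (fun ω => (W ω, Z ω)) := by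
  have h₁ := condMI_pair_eq_add μ X Y W Z
  have h₂ := condMI_pair_eq_add μ X W Y Z
  rw [condMI_congr_right μ X Z (Y := fun ω => (W ω, Y ω)) (Y' := fun ω => (Y ω, W ω))
    (fun _ _ hω => by simp_all) (fun _ _ hω => by simp_all)] at h₂
  linarith [condMI_nonneg μ X W (fun ω => (Y ω, Z ω))]

section CondIndepFun3

variable {α₁ α₂ α₃ : Type} {μ : FinPMF Ω} {X₁ : Ω → α₁} {X₂ : Ω → α₂} {X₃ : Ω → α₃}
  {Q : Ω → γ}

lemma CondIndepFun3.condH_eq_add (h : CondIndepFun3 μ X₁ X₂ X₃ Q) :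
    condH μ (fun ω => (X₁ ω, X₂ ω, X₃ ω)) Q = condH μ X₁ Q + condH μ X₂ Q + condH μ X₃ Q := by
  have h_log : ∀ ω, 0 < μ.p ω →
      Real.logb 2 (prX μ (fun ω => ((X₁ ω, X₂ ω, X₃ ω), Q ω)) ((X₁ ω, X₂ ω, X₃ ω), Q ω)) =
        Real.logb 2 (prX μ (fun ω => (X₁ ω, Q ω)) (X₁ ω, Q ω))
        + Real.logb 2 (prX μ (fun ω => (X₂ ω, Q ω)) (X₂ ω, Q ω))
        + Real.logb 2 (prX μ (fun ω => (X₃ ω, Q ω)) (X₃ ω, Q ω))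
        - Real.logb 2 (prX μ Q (Q ω)) - Real.logb 2 (prX μ Q (Q ω)) := fun ω hω => by
    have hAll := μ.prX_pos (fun ω => ((X₁ ω, X₂ ω, X₃ ω), Q ω)) hω
    have h₁ := μ.prX_pos (fun ω => (X₁ ω, Q ω)) hω
    have h₂ := μ.prX_pos (fun ω => (X₂ ω, Q ω)) hω
    have h₃ := μ.prX_pos (fun ω => (X₃ ω, Q ω)) hω
    have hQ := μ.prX_pos Q hω
    have key := h (X₁ ω) (X₂ ω) (X₃ ω) (Q ω) hQ
    simp only [prX, Prod.mk.injEq, and_assoc] at hAll h₁ h₂ h₃ hQ key ⊢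
    field_simp at key
    have := congrArg (Real.logb 2) key
    rw [Real.logb_mul hAll.ne' (by positivity), Real.logb_pow,
      Real.logb_mul (by positivity) h₃.ne', Real.logb_mul h₁.ne' h₂.ne'] at this
    push_cast at this
    linarith
  let _ : Fintype Ω := μ.fin
  simp only [condH, entH_eq_neg_expect]
  rw [μ.expect_congr h_log]
  simp only [FinPMF.expect, mul_sub, mul_add, sum_sub_distrib, sum_add_distrib]
  ring

lemma CondIndepFun3.rotate (h : CondIndepFun3 μ X₁ X₂ X₃ Q) : CondIndepFun3 μ X₂ X₃ X₁ Q := by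
  intro x₂ x₃ x₁ q hq
  have h_perm : prE μ (fun ω => X₂ ω = x₂ ∧ X₃ ω = x₃ ∧ X₁ ω = x₁ ∧ Q ω = q) =
      prE μ (fun ω => X₁ ω = x₁ ∧ X₂ ω = x₂ ∧ X₃ ω = x₃ ∧ Q ω = q) :=
    congrArg (prE μ) (funext fun ω => propext (by tauto))
  rw [h_perm, h x₁ x₂ x₃ q hq]
  ring

lemma CondIndepFun3.swap (h : CondIndepFun3 μ X₁ X₂ X₃ Q) : CondIndepFun3 μ X₁ X₃ X₂ Q := by
  intro x₁ x₃ x₂ q hq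
  have h_perm : prE μ (fun ω => X₁ ω = x₁ ∧ X₃ ω = x₃ ∧ X₂ ω = x₂ ∧ Q ω = q) =
      prE μ (fun ω => X₁ ω = x₁ ∧ X₂ ω = x₂ ∧ X₃ ω = x₃ ∧ Q ω = q) :=
    congrArg (prE μ) (funext fun ω => propext (by tauto))
  rw [h_perm, h x₁ x₂ x₃ q hq]
  ring

lemma CondIndepFun3.condMI_eq_zero (h : CondIndepFun3 μ X₁ X₂ X₃ Q) :
    condMI μ X₁ (fun ω => (X₂ ω, X₃ ω)) Q = 0 := by
  have h_add := h.condH_eq_add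
  have h₁ := condMI_nonneg μ X₁ (fun ω => (X₂ ω, X₃ ω)) Q
  have h₂₃ := condMI_nonneg μ X₂ X₃ Q
  rw [condMI] at h₁ h₂₃ ⊢
  linarith

end CondIndepFun3

lemma condMI_eq_condH_sub_condH_of_determines (μ : FinPMF Ω) {U : Ω → α} {Y : Ω → β}
    {S : Ω → δ} {Z : Ω → γ} (hS : condMI μ U S Z = 0)
    (hYS : Determines (fun ω => (Y ω, U ω, Z ω)) S)
    (hSY : Determines (fun ω => (S ω, U ω, Z ω)) Y) :
    condMI μ U Y Z = condH μ Y Z - condH μ S Z := by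
  rw [condMI_eq_condH_sub_condH, ← condH_eq_of_determines μ hYS hSY,
    condH_cond_eq_of_condMI_eq_zero μ hS]

lemma condMI_add_condH_le_condH (μ : FinPMF Ω) {U : Ω → α} {Y : Ω → β} {V : Ω → δ}
    {W : Ω → ε} {Z : Ω → γ} (hW : condMI μ U W Z = 0)
    (hV : condMI μ (fun ω => (U ω, W ω)) V Z = 0)
    (hYV : Determines (fun ω => (Y ω, U ω, W ω, Z ω)) V) :
    condMI μ U Y Z + condH μ V Z ≤ condH μ Y (fun ω => (W ω, Z ω)) := by
  have h_cond := condMI_le_condMI_cond_of_condMI_eq_zero μ Y hW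
  rw [condMI_eq_condH_sub_condH μ U Y (fun ω => (W ω, Z ω))] at h_cond
  have h_assoc :
      condH μ V (fun ω => ((U ω, W ω), Z ω)) = condH μ V (fun ω => (U ω, W ω, Z ω)) := by
    simp only [condH]
    rw [entH_congr μ (X := fun ω => (V ω, (U ω, W ω), Z ω)) (Y := fun ω => (V ω, U ω, W ω, Z ω))
        (fun _ _ hω => by simp_all) (fun _ _ hω => by simp_all),
      entH_congr μ (X := fun ω => ((U ω, W ω), Z ω)) (Y := fun ω => (U ω, W ω, Z ω))
        (fun _ _ hω => by simp_all) (fun _ _ hω => by simp_all)]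
  have h_indep := condH_cond_eq_of_condMI_eq_zero μ hV
  have h_det := condH_le_of_determines μ hYV
  linarith

lemma OneToOne.swap {A B C : Type} {f : A → B → C} (h : OneToOne f) :
    OneToOne fun b a => f a b :=
  ⟨h.2, h.1⟩

section Receiver

variable {α' β' γ' σ υ κ : Type} {μ : FinPMF Ω} {Q : Ω → κ} {A : Ω → α} {B : Ω → β}
  {C : Ω → γ} (a : α → α') (b : β → β') (c : γ → γ') (k : β' → γ' → σ) {f : α' → σ → υ}

lemma receiver_condMI_eq (hf : OneToOne f) (h : CondIndepFun3 μ A B C Q) :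
    condMI μ A (fun ω => f (a (A ω)) (k (b (B ω)) (c (C ω)))) Q =
      condH μ (fun ω => f (a (A ω)) (k (b (B ω)) (c (C ω)))) Q -
        condH μ (fun ω => k (b (B ω)) (c (C ω))) Q := by
  refine condMI_eq_condH_sub_condH_of_determines μ
    (condMI_eq_zero_of_determines μ h.condMI_eq_zero (fun _ _ hω => hω) fun _ _ hω => by
      simp_all) (fun ω ω' hω => ?_) fun ω ω' hω => by simp_all
  simp only [Prod.mk.injEq] at hω
  obtain ⟨hY, hA, -⟩ := hω
  exact hf.2 _ (by simpa only [hA] using hY)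

lemma receiver_condMI_le_condH (hf : OneToOne f) (h : CondIndepFun3 μ A B C Q) :
    condMI μ A (fun ω => f (a (A ω)) (k (b (B ω)) (c (C ω)))) Q ≤ condH μ (fun ω => a (A ω)) Q := by
  have h_fst : condH μ (fun ω => f (a (A ω)) (k (b (B ω)) (c (C ω)))) Q ≤
      condH μ (fun ω => (a (A ω), k (b (B ω)) (c (C ω)))) Q :=
    condH_le_of_determines μ fun ω ω' hω => by simp_all
  linarith [receiver_condMI_eq a b c k hf h, condH_pair_le_add μ (fun ω => a (A ω))
    (fun ω => k (b (B ω)) (c (C ω))) Q]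

lemma receiver_condMI_add_condH_le (hk : OneToOne k) (hf : OneToOne f)
    (h : CondIndepFun3 μ A B C Q) :
    condMI μ A (fun ω => f (a (A ω)) (k (b (B ω)) (c (C ω)))) Q + condH μ (fun ω => b (B ω)) Q ≤
      condH μ (fun ω => f (a (A ω)) (k (b (B ω)) (c (C ω)))) (fun ω => (c (C ω), Q ω)) := by
  have hB := h.rotate.condMI_eq_zero
  rw [condMI_comm] at hB
  refine condMI_add_condH_le_condH μ
    (condMI_eq_zero_of_determines μ h.condMI_eq_zero (fun _ _ hω => hω) fun _ _ hω => by
      simp_all)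
    (condMI_eq_zero_of_determines μ hB (fun _ _ hω => by simp_all) fun _ _ hω => by simp_all)
    fun ω ω' hω => ?_
  simp only [Prod.mk.injEq] at hω
  obtain ⟨hY, hA, hc, -⟩ := hω
  exact hk.1 _ (hf.2 _ (by simpa only [hA, hc] using hY))

lemma receiver_rate_bounds (hk : OneToOne k) (hf : OneToOne f) (h : CondIndepFun3 μ A B C Q)
    {R₁ R₂ R₃ : ℝ} (hR : R₁ < condMI μ A (fun ω => f (a (A ω)) (k (b (B ω)) (c (C ω)))) Q) :
    R₁ < condH μ (fun ω => a (A ω)) Q ∧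
    R₁ + min R₂ (condH μ (fun ω => b (B ω)) Q) <
      condH μ (fun ω => f (a (A ω)) (k (b (B ω)) (c (C ω)))) (fun ω => (c (C ω), Q ω)) ∧
    R₁ + min R₃ (condH μ (fun ω => c (C ω)) Q) <
      condH μ (fun ω => f (a (A ω)) (k (b (B ω)) (c (C ω)))) (fun ω => (b (B ω), Q ω)) ∧
    R₁ + min (min (R₂ + R₃) (R₂ + condH μ (fun ω => c (C ω)) Q))
        (min (condH μ (fun ω => b (B ω)) Q + R₃) (condH μ (fun ω => k (b (B ω)) (c (C ω))) Q)) <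
      condH μ (fun ω => f (a (A ω)) (k (b (B ω)) (c (C ω)))) Q := by
  have h_eq := receiver_condMI_eq a b c k hf h
  have h_b := receiver_condMI_add_condH_le a b c k hk hf h
  have h_c := receiver_condMI_add_condH_le a c b (fun c b => k b c) hk.swap hf h.swap
  refine ⟨hR.trans_le (receiver_condMI_le_condH a b c k hf h), ?_, ?_, ?_⟩
  · linarith [min_le_right R₂ (condH μ (fun ω => b (B ω)) Q)]
  · linarith [min_le_right R₃ (condH μ (fun ω => c (C ω)) Q)]
  · linarith [min_le_right (min (R₂ + R₃) (R₂ + condH μ (fun ω => c (C ω)) Q))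
      (min (condH μ (fun ω => b (B ω)) Q + R₃) (condH μ (fun ω => k (b (B ω)) (c (C ω))) Q)),
      min_le_right (condH μ (fun ω => b (B ω)) Q + R₃) (condH μ (fun ω => k (b (B ω)) (c (C ω))) Q)]

end Receiver

end

theorem tin_subset_interference_decoding_general
    {𝒳₁ 𝒳₂ 𝒳₃ 𝒳₁₁ 𝒳₁₂ 𝒳₁₃ 𝒳₂₁ 𝒳₂₂ 𝒳₂₃ 𝒳₃₁ 𝒳₃₂ 𝒳₃₃ 𝒮₁ 𝒮₂ 𝒮₃ 𝒴₁ 𝒴₂ 𝒴₃ : Type}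
    (g₁₁ : 𝒳₁ → 𝒳₁₁) (g₁₂ : 𝒳₁ → 𝒳₁₂) (g₁₃ : 𝒳₁ → 𝒳₁₃)
    (g₂₁ : 𝒳₂ → 𝒳₂₁) (g₂₂ : 𝒳₂ → 𝒳₂₂) (g₂₃ : 𝒳₂ → 𝒳₂₃)
    (g₃₁ : 𝒳₃ → 𝒳₃₁) (g₃₂ : 𝒳₃ → 𝒳₃₂) (g₃₃ : 𝒳₃ → 𝒳₃₃)
    (h₁ : 𝒳₂₁ → 𝒳₃₁ → 𝒮₁) (h₂ : 𝒳₁₂ → 𝒳₃₂ → 𝒮₂) (h₃ : 𝒳₁₃ → 𝒳₂₃ → 𝒮₃)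
    (f₁ : 𝒳₁₁ → 𝒮₁ → 𝒴₁) (f₂ : 𝒳₂₂ → 𝒮₂ → 𝒴₂) (f₃ : 𝒳₃₃ → 𝒮₃ → 𝒴₃)
    (hh₁ : OneToOne h₁) (hh₂ : OneToOne h₂) (hh₃ : OneToOne h₃)
    (hf₁ : OneToOne f₁) (hf₂ : OneToOne f₂) (hf₃ : OneToOne f₃) :
    {r : ℝ × ℝ × ℝ | 0 ≤ r.1 ∧ 0 ≤ r.2.1 ∧ 0 ≤ r.2.2 ∧
      ∃ (Ω 𝒬 : Type) (_ : Fintype 𝒬) (_ : Nonempty 𝒬) (μ : FinPMF Ω)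
        (Q : Ω → 𝒬) (X₁ : Ω → 𝒳₁) (X₂ : Ω → 𝒳₂) (X₃ : Ω → 𝒳₃),
        CondIndepFun3 μ X₁ X₂ X₃ Q ∧
        r.1 < condMI μ X₁ (fun ω => f₁ (g₁₁ (X₁ ω)) (h₁ (g₂₁ (X₂ ω)) (g₃₁ (X₃ ω)))) Q ∧
        r.2.1 < condMI μ X₂ (fun ω => f₂ (g₂₂ (X₂ ω)) (h₂ (g₁₂ (X₁ ω)) (g₃₂ (X₃ ω)))) Q ∧
        r.2.2 < condMI μ X₃ (fun ω => f₃ (g₃₃ (X₃ ω)) (h₃ (g₁₃ (X₁ ω)) (g₂₃ (X₂ ω)))) Q} ⊆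
    {r : ℝ × ℝ × ℝ | 0 ≤ r.1 ∧ 0 ≤ r.2.1 ∧ 0 ≤ r.2.2 ∧
      ∃ (Ω 𝒬 : Type) (_ : Fintype 𝒬) (_ : Nonempty 𝒬) (μ : FinPMF Ω)
        (Q : Ω → 𝒬) (X₁ : Ω → 𝒳₁) (X₂ : Ω → 𝒳₂) (X₃ : Ω → 𝒳₃),
        CondIndepFun3 μ X₁ X₂ X₃ Q ∧
        r.1 < condH μ (fun ω => g₁₁ (X₁ ω)) Q ∧
        r.1 + min r.2.1 (condH μ (fun ω => g₂₁ (X₂ ω)) Q) < condH μ (fun ω => f₁ (g₁₁ (X₁ ω)) (h₁ (g₂₁ (X₂ ω)) (g₃₁ (X₃ ω)))) (fun ω => (g₃₁ (X₃ ω), Q ω)) ∧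
        r.1 + min r.2.2 (condH μ (fun ω => g₃₁ (X₃ ω)) Q) < condH μ (fun ω => f₁ (g₁₁ (X₁ ω)) (h₁ (g₂₁ (X₂ ω)) (g₃₁ (X₃ ω)))) (fun ω => (g₂₁ (X₂ ω), Q ω)) ∧
        r.1 + min (min (r.2.1 + r.2.2) (r.2.1 + condH μ (fun ω => g₃₁ (X₃ ω)) Q)) (min (condH μ (fun ω => g₂₁ (X₂ ω)) Q + r.2.2) (condH μ (fun ω => h₁ (g₂₁ (X₂ ω)) (g₃₁ (X₃ ω))) Q)) < condH μ (fun ω => f₁ (g₁₁ (X₁ ω)) (h₁ (g₂₁ (X₂ ω)) (g₃₁ (X₃ ω)))) Q ∧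
        r.2.1 < condH μ (fun ω => g₂₂ (X₂ ω)) Q ∧
        r.2.1 + min r.2.2 (condH μ (fun ω => g₃₂ (X₃ ω)) Q) < condH μ (fun ω => f₂ (g₂₂ (X₂ ω)) (h₂ (g₁₂ (X₁ ω)) (g₃₂ (X₃ ω)))) (fun ω => (g₁₂ (X₁ ω), Q ω)) ∧
        r.2.1 + min r.1 (condH μ (fun ω => g₁₂ (X₁ ω)) Q) < condH μ (fun ω => f₂ (g₂₂ (X₂ ω)) (h₂ (g₁₂ (X₁ ω)) (g₃₂ (X₃ ω)))) (fun ω => (g₃₂ (X₃ ω), Q ω)) ∧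
        r.2.1 + min (min (r.2.2 + r.1) (r.2.2 + condH μ (fun ω => g₁₂ (X₁ ω)) Q)) (min (condH μ (fun ω => g₃₂ (X₃ ω)) Q + r.1) (condH μ (fun ω => h₂ (g₁₂ (X₁ ω)) (g₃₂ (X₃ ω))) Q)) < condH μ (fun ω => f₂ (g₂₂ (X₂ ω)) (h₂ (g₁₂ (X₁ ω)) (g₃₂ (X₃ ω)))) Q ∧
        r.2.2 < condH μ (fun ω => g₃₃ (X₃ ω)) Q ∧
        r.2.2 + min r.1 (condH μ (fun ω => g₁₃ (X₁ ω)) Q) < condH μ (fun ω => f₃ (g₃₃ (X₃ ω)) (h₃ (g₁₃ (X₁ ω)) (g₂₃ (X₂ ω)))) (fun ω => (g₂₃ (X₂ ω), Q ω)) ∧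
        r.2.2 + min r.2.1 (condH μ (fun ω => g₂₃ (X₂ ω)) Q) < condH μ (fun ω => f₃ (g₃₃ (X₃ ω)) (h₃ (g₁₃ (X₁ ω)) (g₂₃ (X₂ ω)))) (fun ω => (g₁₃ (X₁ ω), Q ω)) ∧
        r.2.2 + min (min (r.1 + r.2.1) (r.1 + condH μ (fun ω => g₂₃ (X₂ ω)) Q)) (min (condH μ (fun ω => g₁₃ (X₁ ω)) Q + r.2.1) (condH μ (fun ω => h₃ (g₁₃ (X₁ ω)) (g₂₃ (X₂ ω))) Q)) < condH μ (fun ω => f₃ (g₃₃ (X₃ ω)) (h₃ (g₁₃ (X₁ ω)) (g₂₃ (X₂ ω)))) Q} := by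
  rintro r ⟨hr₁, hr₂, hr₃, Ω, 𝒬, i₁, i₂, μ, Q, X₁, X₂, X₃, h, hI₁, hI₂, hI₃⟩
  obtain ⟨h₁₁, h₁₂, h₁₃, h₁₄⟩ :=
    receiver_rate_bounds g₁₁ g₂₁ g₃₁ h₁ (R₂ := r.2.1) (R₃ := r.2.2) hh₁ hf₁ h hI₁
  obtain ⟨h₂₁, h₂₂, h₂₃, h₂₄⟩ :=
    receiver_rate_bounds g₂₂ g₃₂ g₁₂ (fun x y => h₂ y x) (R₂ := r.2.2) (R₃ := r.1) hh₂.swap hf₂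
      h.rotate hI₂
  obtain ⟨h₃₁, h₃₂, h₃₃, h₃₄⟩ :=
    receiver_rate_bounds g₃₃ g₁₃ g₂₃ h₃ (R₂ := r.1) (R₃ := r.2.1) hh₃ hf₃ h.rotate.rotate hI₃
  exact ⟨hr₁, hr₂, hr₃, Ω, 𝒬, i₁, i₂, μ, Q, X₁, X₂, X₃, h,
    h₁₁, h₁₂, h₁₃, h₁₄, h₂₁, h₂₂, h₂₃, h₂₄, h₃₁, h₃₂, h₃₃, h₃₄⟩

/-- For any fixed three-user-pair deterministic interference channel,
the treating-interference-as-noise region is included in the interference-decoding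
region: `ℛ_TIN ⊆ ℛ_ID`. -/
theorem tin_subset_interference_decoding
    {𝒳₁ 𝒳₂ 𝒳₃ 𝒳₁₁ 𝒳₁₂ 𝒳₁₃ 𝒳₂₁ 𝒳₂₂ 𝒳₂₃ 𝒳₃₁ 𝒳₃₂ 𝒳₃₃ 𝒮₁ 𝒮₂ 𝒮₃ 𝒴₁ 𝒴₂ 𝒴₃ : Type}
    [Fintype 𝒳₁] [Nonempty 𝒳₁]
    [Fintype 𝒳₂] [Nonempty 𝒳₂]
    [Fintype 𝒳₃] [Nonempty 𝒳₃]
    [Fintype 𝒳₁₁] [Nonempty 𝒳₁₁]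
    [Fintype 𝒳₁₂] [Nonempty 𝒳₁₂]
    [Fintype 𝒳₁₃] [Nonempty 𝒳₁₃]
    [Fintype 𝒳₂₁] [Nonempty 𝒳₂₁]
    [Fintype 𝒳₂₂] [Nonempty 𝒳₂₂]
    [Fintype 𝒳₂₃] [Nonempty 𝒳₂₃]
    [Fintype 𝒳₃₁] [Nonempty 𝒳₃₁]
    [Fintype 𝒳₃₂] [Nonempty 𝒳₃₂]
    [Fintype 𝒳₃₃] [Nonempty 𝒳₃₃]
    [Fintype 𝒮₁] [Nonempty 𝒮₁]
    [Fintype 𝒮₂] [Nonempty 𝒮₂]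
    [Fintype 𝒮₃] [Nonempty 𝒮₃]
    [Fintype 𝒴₁] [Nonempty 𝒴₁]
    [Fintype 𝒴₂] [Nonempty 𝒴₂]
    [Fintype 𝒴₃] [Nonempty 𝒴₃]
    (g₁₁ : 𝒳₁ → 𝒳₁₁) (g₁₂ : 𝒳₁ → 𝒳₁₂) (g₁₃ : 𝒳₁ → 𝒳₁₃)
    (g₂₁ : 𝒳₂ → 𝒳₂₁) (g₂₂ : 𝒳₂ → 𝒳₂₂) (g₂₃ : 𝒳₂ → 𝒳₂₃)
    (g₃₁ : 𝒳₃ → 𝒳₃₁) (g₃₂ : 𝒳₃ → 𝒳₃₂) (g₃₃ : 𝒳₃ → 𝒳₃₃)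
    (h₁ : 𝒳₂₁ → 𝒳₃₁ → 𝒮₁) (h₂ : 𝒳₁₂ → 𝒳₃₂ → 𝒮₂) (h₃ : 𝒳₁₃ → 𝒳₂₃ → 𝒮₃)
    (f₁ : 𝒳₁₁ → 𝒮₁ → 𝒴₁) (f₂ : 𝒳₂₂ → 𝒮₂ → 𝒴₂) (f₃ : 𝒳₃₃ → 𝒮₃ → 𝒴₃)
    (hh₁ : OneToOne h₁) (hh₂ : OneToOne h₂) (hh₃ : OneToOne h₃)
    (hf₁ : OneToOne f₁) (hf₂ : OneToOne f₂) (hf₃ : OneToOne f₃) :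
    {r : ℝ × ℝ × ℝ | 0 ≤ r.1 ∧ 0 ≤ r.2.1 ∧ 0 ≤ r.2.2 ∧
      ∃ (Ω 𝒬 : Type) (_ : Fintype 𝒬) (_ : Nonempty 𝒬) (μ : FinPMF Ω)
        (Q : Ω → 𝒬) (X₁ : Ω → 𝒳₁) (X₂ : Ω → 𝒳₂) (X₃ : Ω → 𝒳₃),
        CondIndepFun3 μ X₁ X₂ X₃ Q ∧
        r.1 < condMI μ X₁ (fun ω => f₁ (g₁₁ (X₁ ω)) (h₁ (g₂₁ (X₂ ω)) (g₃₁ (X₃ ω)))) Q ∧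
        r.2.1 < condMI μ X₂ (fun ω => f₂ (g₂₂ (X₂ ω)) (h₂ (g₁₂ (X₁ ω)) (g₃₂ (X₃ ω)))) Q ∧
        r.2.2 < condMI μ X₃ (fun ω => f₃ (g₃₃ (X₃ ω)) (h₃ (g₁₃ (X₁ ω)) (g₂₃ (X₂ ω)))) Q} ⊆
    {r : ℝ × ℝ × ℝ | 0 ≤ r.1 ∧ 0 ≤ r.2.1 ∧ 0 ≤ r.2.2 ∧
      ∃ (Ω 𝒬 : Type) (_ : Fintype 𝒬) (_ : Nonempty 𝒬) (μ : FinPMF Ω)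
        (Q : Ω → 𝒬) (X₁ : Ω → 𝒳₁) (X₂ : Ω → 𝒳₂) (X₃ : Ω → 𝒳₃),
        CondIndepFun3 μ X₁ X₂ X₃ Q ∧
        r.1 < condH μ (fun ω => g₁₁ (X₁ ω)) Q ∧
        r.1 + min r.2.1 (condH μ (fun ω => g₂₁ (X₂ ω)) Q) < condH μ (fun ω => f₁ (g₁₁ (X₁ ω)) (h₁ (g₂₁ (X₂ ω)) (g₃₁ (X₃ ω)))) (fun ω => (g₃₁ (X₃ ω), Q ω)) ∧
        r.1 + min r.2.2 (condH μ (fun ω => g₃₁ (X₃ ω)) Q) < condH μ (fun ω => f₁ (g₁₁ (X₁ ω)) (h₁ (g₂₁ (X₂ ω)) (g₃₁ (X₃ ω)))) (fun ω => (g₂₁ (X₂ ω), Q ω)) ∧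
        r.1 + min (min (r.2.1 + r.2.2) (r.2.1 + condH μ (fun ω => g₃₁ (X₃ ω)) Q)) (min (condH μ (fun ω => g₂₁ (X₂ ω)) Q + r.2.2) (condH μ (fun ω => h₁ (g₂₁ (X₂ ω)) (g₃₁ (X₃ ω))) Q)) < condH μ (fun ω => f₁ (g₁₁ (X₁ ω)) (h₁ (g₂₁ (X₂ ω)) (g₃₁ (X₃ ω)))) Q ∧
        r.2.1 < condH μ (fun ω => g₂₂ (X₂ ω)) Q ∧
        r.2.1 + min r.2.2 (condH μ (fun ω => g₃₂ (X₃ ω)) Q) < condH μ (fun ω => f₂ (g₂₂ (X₂ ω)) (h₂ (g₁₂ (X₁ ω)) (g₃₂ (X₃ ω)))) (fun ω => (g₁₂ (X₁ ω), Q ω)) ∧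
        r.2.1 + min r.1 (condH μ (fun ω => g₁₂ (X₁ ω)) Q) < condH μ (fun ω => f₂ (g₂₂ (X₂ ω)) (h₂ (g₁₂ (X₁ ω)) (g₃₂ (X₃ ω)))) (fun ω => (g₃₂ (X₃ ω), Q ω)) ∧
        r.2.1 + min (min (r.2.2 + r.1) (r.2.2 + condH μ (fun ω => g₁₂ (X₁ ω)) Q)) (min (condH μ (fun ω => g₃₂ (X₃ ω)) Q + r.1) (condH μ (fun ω => h₂ (g₁₂ (X₁ ω)) (g₃₂ (X₃ ω))) Q)) < condH μ (fun ω => f₂ (g₂₂ (X₂ ω)) (h₂ (g₁₂ (X₁ ω)) (g₃₂ (X₃ ω)))) Q ∧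
        r.2.2 < condH μ (fun ω => g₃₃ (X₃ ω)) Q ∧
        r.2.2 + min r.1 (condH μ (fun ω => g₁₃ (X₁ ω)) Q) < condH μ (fun ω => f₃ (g₃₃ (X₃ ω)) (h₃ (g₁₃ (X₁ ω)) (g₂₃ (X₂ ω)))) (fun ω => (g₂₃ (X₂ ω), Q ω)) ∧
        r.2.2 + min r.2.1 (condH μ (fun ω => g₂₃ (X₂ ω)) Q) < condH μ (fun ω => f₃ (g₃₃ (X₃ ω)) (h₃ (g₁₃ (X₁ ω)) (g₂₃ (X₂ ω)))) (fun ω => (g₁₃ (X₁ ω), Q ω)) ∧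
        r.2.2 + min (min (r.1 + r.2.1) (r.1 + condH μ (fun ω => g₂₃ (X₂ ω)) Q)) (min (condH μ (fun ω => g₁₃ (X₁ ω)) Q + r.2.1) (condH μ (fun ω => h₃ (g₁₃ (X₁ ω)) (g₂₃ (X₂ ω))) Q)) < condH μ (fun ω => f₃ (g₃₃ (X₃ ω)) (h₃ (g₁₃ (X₁ ω)) (g₂₃ (X₂ ω)))) Q} :=
  tin_subset_interference_decoding_general g₁₁ g₁₂ g₁₃ g₂₁ g₂₂ g₂₃ g₃₁ g₃₂ g₃₃ h₁ h₂ h₃ f₁ f₂ f₃ hh₁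
    hh₂ hh₃ hf₁ hf₂ hf₃
end

section
/- Let the three-user-pair deterministic interference channel be fixed, and let (Q,X₁,X₂,X₃) be an admissible input satisfying the strong-interference conditions H(X₁₁|Q) ≤ min{H(X₁₂|Q), H(X₁₃|Q)}, H(X₂₂|Q) ≤ min{H(X₂₁|Q), H(X₂₃|Q)}, H(X₃₃|Q) ≤ min{H(X₃₁|Q), H(X₃₂|Q)}, and the invertibility conditions H(S₁|Q) = H(X₂₁|Q)+H(X₃₁|Q), H(S₂|Q) = H(X₁₂|Q)+H(X₃₂|Q), H(S₃|Q) = H(X₁₃|Q)+H(X₂₃|Q). Then the set of triples (R₁,R₂,R₃) of nonnegative reals satisfying the twelve interference-decoding inequalities [(receiver 1) R₁ < H(X₁₁|Q); R₁ + min{R₂, H(X₂₁|Q)} < H(Y₁|X₃₁,Q); R₁ + min{R₃, H(X₃₁|Q)} < H(Y₁|X₂₁,Q); R₁ + min{R₂+R₃, R₂+H(X₃₁|Q), H(X₂₁|Q)+R₃, H(S₁|Q)} < H(Y₁|Q); and the corresponding inequalities for receivers 2 and 3 obtained by the cyclic subscript replacements 1↦2↦3↦1 and 1↦3↦2↦1]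 is equal to the set of triples (R₁,R₂,R₃) of nonnegative reals satisfying: R_k < H(X_{kk}|Q) for k = 1,2,3; R₁+R₂ < min{H(Y₁|X₃₁,Q), H(Y₂|X₃₂,Q)}; R₁+R₃ < min{H(Y₁|X₂₁,Q), H(Y₃|X₂₃,Q)}; R₂+R₃ < min{H(Y₂|X₁₂,Q), H(Y₃|X₁₃,Q)}; and R₁+R₂+R₃ < min{H(Y₁|Q), H(Y₂|Q), H(Y₃|Q)}. -/
open scoped Classical
open Finset

/-- Under the strong-interference and invertibility conditions, the
twelve interference-decoding inequalities define the same rate set as the simplified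
(capacity-region) inequalities. -/
theorem interference_decoding_region_eq_under_strong_interference
    {𝒳₁ 𝒳₂ 𝒳₃ 𝒳₁₁ 𝒳₁₂ 𝒳₁₃ 𝒳₂₁ 𝒳₂₂ 𝒳₂₃ 𝒳₃₁ 𝒳₃₂ 𝒳₃₃ 𝒮₁ 𝒮₂ 𝒮₃ 𝒴₁ 𝒴₂ 𝒴₃ : Type}
    [Fintype 𝒳₁] [Nonempty 𝒳₁]
    [Fintype 𝒳₂] [Nonempty 𝒳₂]
    [Fintype 𝒳₃] [Nonempty 𝒳₃]
    [Fintype 𝒳₁₁] [Nonempty 𝒳₁₁]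
    [Fintype 𝒳₁₂] [Nonempty 𝒳₁₂]
    [Fintype 𝒳₁₃] [Nonempty 𝒳₁₃]
    [Fintype 𝒳₂₁] [Nonempty 𝒳₂₁]
    [Fintype 𝒳₂₂] [Nonempty 𝒳₂₂]
    [Fintype 𝒳₂₃] [Nonempty 𝒳₂₃]
    [Fintype 𝒳₃₁] [Nonempty 𝒳₃₁]
    [Fintype 𝒳₃₂] [Nonempty 𝒳₃₂]
    [Fintype 𝒳₃₃] [Nonempty 𝒳₃₃]
    [Fintype 𝒮₁] [Nonempty 𝒮₁]
    [Fintype 𝒮₂] [Nonempty 𝒮₂]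
    [Fintype 𝒮₃] [Nonempty 𝒮₃]
    [Fintype 𝒴₁] [Nonempty 𝒴₁]
    [Fintype 𝒴₂] [Nonempty 𝒴₂]
    [Fintype 𝒴₃] [Nonempty 𝒴₃]
    (g₁₁ : 𝒳₁ → 𝒳₁₁) (g₁₂ : 𝒳₁ → 𝒳₁₂) (g₁₃ : 𝒳₁ → 𝒳₁₃)
    (g₂₁ : 𝒳₂ → 𝒳₂₁) (g₂₂ : 𝒳₂ → 𝒳₂₂) (g₂₃ : 𝒳₂ → 𝒳₂₃)
    (g₃₁ : 𝒳₃ → 𝒳₃₁) (g₃₂ : 𝒳₃ → 𝒳₃₂) (g₃₃ : 𝒳₃ → 𝒳₃₃)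
    (h₁ : 𝒳₂₁ → 𝒳₃₁ → 𝒮₁) (h₂ : 𝒳₁₂ → 𝒳₃₂ → 𝒮₂) (h₃ : 𝒳₁₃ → 𝒳₂₃ → 𝒮₃)
    (f₁ : 𝒳₁₁ → 𝒮₁ → 𝒴₁) (f₂ : 𝒳₂₂ → 𝒮₂ → 𝒴₂) (f₃ : 𝒳₃₃ → 𝒮₃ → 𝒴₃)
    (hh₁ : OneToOne h₁) (hh₂ : OneToOne h₂) (hh₃ : OneToOne h₃)
    (hf₁ : OneToOne f₁) (hf₂ : OneToOne f₂) (hf₃ : OneToOne f₃)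
    {Ω 𝒬 : Type} [Fintype 𝒬] [Nonempty 𝒬] (μ : FinPMF Ω)
    (Q : Ω → 𝒬) (X₁ : Ω → 𝒳₁) (X₂ : Ω → 𝒳₂) (X₃ : Ω → 𝒳₃)
    (hindep : CondIndepFun3 μ X₁ X₂ X₃ Q)
    (hstrong₁ : condH μ (fun ω => g₁₁ (X₁ ω)) Q ≤
      min (condH μ (fun ω => g₁₂ (X₁ ω)) Q) (condH μ (fun ω => g₁₃ (X₁ ω)) Q))
    (hstrong₂ : condH μ (fun ω => g₂₂ (X₂ ω)) Q ≤
      min (condH μ (fun ω => g₂₁ (X₂ ω)) Q) (condH μ (fun ω => g₂₃ (X₂ ω)) Q))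
    (hstrong₃ : condH μ (fun ω => g₃₃ (X₃ ω)) Q ≤
      min (condH μ (fun ω => g₃₁ (X₃ ω)) Q) (condH μ (fun ω => g₃₂ (X₃ ω)) Q))
    (hinv₁ : condH μ (fun ω => h₁ (g₂₁ (X₂ ω)) (g₃₁ (X₃ ω))) Q = condH μ (fun ω => g₂₁ (X₂ ω)) Q + condH μ (fun ω => g₃₁ (X₃ ω)) Q)
    (hinv₂ : condH μ (fun ω => h₂ (g₁₂ (X₁ ω)) (g₃₂ (X₃ ω))) Q = condH μ (fun ω => g₁₂ (X₁ ω)) Q + condH μ (fun ω => g₃₂ (X₃ ω)) Q)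
    (hinv₃ : condH μ (fun ω => h₃ (g₁₃ (X₁ ω)) (g₂₃ (X₂ ω))) Q = condH μ (fun ω => g₁₃ (X₁ ω)) Q + condH μ (fun ω => g₂₃ (X₂ ω)) Q) :
    {r : ℝ × ℝ × ℝ | 0 ≤ r.1 ∧ 0 ≤ r.2.1 ∧ 0 ≤ r.2.2 ∧
        r.1 < condH μ (fun ω => g₁₁ (X₁ ω)) Q ∧
        r.1 + min r.2.1 (condH μ (fun ω => g₂₁ (X₂ ω)) Q) < condH μ (fun ω => f₁ (g₁₁ (X₁ ω)) (h₁ (g₂₁ (X₂ ω)) (g₃₁ (X₃ ω)))) (fun ω => (g₃₁ (X₃ ω), Q ω)) ∧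
        r.1 + min r.2.2 (condH μ (fun ω => g₃₁ (X₃ ω)) Q) < condH μ (fun ω => f₁ (g₁₁ (X₁ ω)) (h₁ (g₂₁ (X₂ ω)) (g₃₁ (X₃ ω)))) (fun ω => (g₂₁ (X₂ ω), Q ω)) ∧
        r.1 + min (min (r.2.1 + r.2.2) (r.2.1 + condH μ (fun ω => g₃₁ (X₃ ω)) Q)) (min (condH μ (fun ω => g₂₁ (X₂ ω)) Q + r.2.2) (condH μ (fun ω => h₁ (g₂₁ (X₂ ω)) (g₃₁ (X₃ ω))) Q)) < condH μ (fun ω => f₁ (g₁₁ (X₁ ω)) (h₁ (g₂₁ (X₂ ω)) (g₃₁ (X₃ ω)))) Q ∧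
        r.2.1 < condH μ (fun ω => g₂₂ (X₂ ω)) Q ∧
        r.2.1 + min r.2.2 (condH μ (fun ω => g₃₂ (X₃ ω)) Q) < condH μ (fun ω => f₂ (g₂₂ (X₂ ω)) (h₂ (g₁₂ (X₁ ω)) (g₃₂ (X₃ ω)))) (fun ω => (g₁₂ (X₁ ω), Q ω)) ∧
        r.2.1 + min r.1 (condH μ (fun ω => g₁₂ (X₁ ω)) Q) < condH μ (fun ω => f₂ (g₂₂ (X₂ ω)) (h₂ (g₁₂ (X₁ ω)) (g₃₂ (X₃ ω)))) (fun ω => (g₃₂ (X₃ ω), Q ω)) ∧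
        r.2.1 + min (min (r.2.2 + r.1) (r.2.2 + condH μ (fun ω => g₁₂ (X₁ ω)) Q)) (min (condH μ (fun ω => g₃₂ (X₃ ω)) Q + r.1) (condH μ (fun ω => h₂ (g₁₂ (X₁ ω)) (g₃₂ (X₃ ω))) Q)) < condH μ (fun ω => f₂ (g₂₂ (X₂ ω)) (h₂ (g₁₂ (X₁ ω)) (g₃₂ (X₃ ω)))) Q ∧
        r.2.2 < condH μ (fun ω => g₃₃ (X₃ ω)) Q ∧
        r.2.2 + min r.1 (condH μ (fun ω => g₁₃ (X₁ ω)) Q) < condH μ (fun ω => f₃ (g₃₃ (X₃ ω)) (h₃ (g₁₃ (X₁ ω)) (g₂₃ (X₂ ω)))) (fun ω => (g₂₃ (X₂ ω), Q ω)) ∧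
        r.2.2 + min r.2.1 (condH μ (fun ω => g₂₃ (X₂ ω)) Q) < condH μ (fun ω => f₃ (g₃₃ (X₃ ω)) (h₃ (g₁₃ (X₁ ω)) (g₂₃ (X₂ ω)))) (fun ω => (g₁₃ (X₁ ω), Q ω)) ∧
        r.2.2 + min (min (r.1 + r.2.1) (r.1 + condH μ (fun ω => g₂₃ (X₂ ω)) Q)) (min (condH μ (fun ω => g₁₃ (X₁ ω)) Q + r.2.1) (condH μ (fun ω => h₃ (g₁₃ (X₁ ω)) (g₂₃ (X₂ ω))) Q)) < condH μ (fun ω => f₃ (g₃₃ (X₃ ω)) (h₃ (g₁₃ (X₁ ω)) (g₂₃ (X₂ ω)))) Q} =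
    {r : ℝ × ℝ × ℝ | 0 ≤ r.1 ∧ 0 ≤ r.2.1 ∧ 0 ≤ r.2.2 ∧
        r.1 < condH μ (fun ω => g₁₁ (X₁ ω)) Q ∧
        r.2.1 < condH μ (fun ω => g₂₂ (X₂ ω)) Q ∧
        r.2.2 < condH μ (fun ω => g₃₃ (X₃ ω)) Q ∧
        r.1 + r.2.1 < min (condH μ (fun ω => f₁ (g₁₁ (X₁ ω)) (h₁ (g₂₁ (X₂ ω)) (g₃₁ (X₃ ω)))) (fun ω => (g₃₁ (X₃ ω), Q ω))) (condH μ (fun ω => f₂ (g₂₂ (X₂ ω)) (h₂ (g₁₂ (X₁ ω)) (g₃₂ (X₃ ω)))) (fun ω => (g₃₂ (X₃ ω), Q ω))) ∧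
        r.1 + r.2.2 < min (condH μ (fun ω => f₁ (g₁₁ (X₁ ω)) (h₁ (g₂₁ (X₂ ω)) (g₃₁ (X₃ ω)))) (fun ω => (g₂₁ (X₂ ω), Q ω))) (condH μ (fun ω => f₃ (g₃₃ (X₃ ω)) (h₃ (g₁₃ (X₁ ω)) (g₂₃ (X₂ ω)))) (fun ω => (g₂₃ (X₂ ω), Q ω))) ∧
        r.2.1 + r.2.2 < min (condH μ (fun ω => f₂ (g₂₂ (X₂ ω)) (h₂ (g₁₂ (X₁ ω)) (g₃₂ (X₃ ω)))) (fun ω => (g₁₂ (X₁ ω), Q ω))) (condH μ (fun ω => f₃ (g₃₃ (X₃ ω)) (h₃ (g₁₃ (X₁ ω)) (g₂₃ (X₂ ω)))) (fun ω => (g₁₃ (X₁ ω), Q ω))) ∧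
        r.1 + r.2.1 + r.2.2 < min (condH μ (fun ω => f₁ (g₁₁ (X₁ ω)) (h₁ (g₂₁ (X₂ ω)) (g₃₁ (X₃ ω)))) Q) (min (condH μ (fun ω => f₂ (g₂₂ (X₂ ω)) (h₂ (g₁₂ (X₁ ω)) (g₃₂ (X₃ ω)))) Q) (condH μ (fun ω => f₃ (g₃₃ (X₃ ω)) (h₃ (g₁₃ (X₁ ω)) (g₂₃ (X₂ ω)))) Q))} := by
  
  have key : ∀ x y b c s : ℝ, x ≤ b → y ≤ c → s = b + c →
      min (min (x + y) (x + c)) (min (b + y) s) = x + y := by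
    intro x y b c s hx hy hs
    have e1 : min (x + y) (x + c) = x + y := min_eq_left (by linarith)
    have e2 : x + y ≤ min (b + y) s := le_min (by linarith) (by linarith)
    rw [e1]
    exact min_eq_left e2
  have hA₁₂ : condH μ (fun ω => g₁₁ (X₁ ω)) Q ≤ condH μ (fun ω => g₁₂ (X₁ ω)) Q :=
    hstrong₁.trans (min_le_left _ _)
  have hA₁₃ : condH μ (fun ω => g₁₁ (X₁ ω)) Q ≤ condH μ (fun ω => g₁₃ (X₁ ω)) Q :=
    hstrong₁.trans (min_le_right _ _)
  have hA₂₁ : condH μ (fun ω => g₂₂ (X₂ ω)) Q ≤ condH μ (fun ω => g₂₁ (X₂ ω)) Q :=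
    hstrong₂.trans (min_le_left _ _)
  have hA₂₃ : condH μ (fun ω => g₂₂ (X₂ ω)) Q ≤ condH μ (fun ω => g₂₃ (X₂ ω)) Q :=
    hstrong₂.trans (min_le_right _ _)
  have hA₃₁ : condH μ (fun ω => g₃₃ (X₃ ω)) Q ≤ condH μ (fun ω => g₃₁ (X₃ ω)) Q :=
    hstrong₃.trans (min_le_left _ _)
  have hA₃₂ : condH μ (fun ω => g₃₃ (X₃ ω)) Q ≤ condH μ (fun ω => g₃₂ (X₃ ω)) Q :=
    hstrong₃.trans (min_le_right _ _)
  ext ⟨R₁, R₂, R₃⟩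
  simp only [Set.mem_setOf_eq]
  constructor
  · rintro ⟨h0a, h0b, h0c, h1, h2, h3, h4, h5, h6, h7, h8, h9, h10, h11, h12⟩
    have hR₁₂ : R₁ ≤ condH μ (fun ω => g₁₂ (X₁ ω)) Q := (h1.trans_le hA₁₂).le
    have hR₁₃ : R₁ ≤ condH μ (fun ω => g₁₃ (X₁ ω)) Q := (h1.trans_le hA₁₃).le
    have hR₂₁ : R₂ ≤ condH μ (fun ω => g₂₁ (X₂ ω)) Q := (h5.trans_le hA₂₁).le
    have hR₂₃ : R₂ ≤ condH μ (fun ω => g₂₃ (X₂ ω)) Q := (h5.trans_le hA₂₃).le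
    have hR₃₁ : R₃ ≤ condH μ (fun ω => g₃₁ (X₃ ω)) Q := (h9.trans_le hA₃₁).le
    have hR₃₂ : R₃ ≤ condH μ (fun ω => g₃₂ (X₃ ω)) Q := (h9.trans_le hA₃₂).le
    rw [min_eq_left hR₂₁] at h2
    rw [min_eq_left hR₃₁] at h3
    rw [key R₂ R₃ _ _ _ hR₂₁ hR₃₁ hinv₁] at h4
    rw [min_eq_left hR₃₂] at h6
    rw [min_eq_left hR₁₂] at h7
    rw [key R₃ R₁ _ _ _ hR₃₂ hR₁₂ (by linarith [hinv₂])] at h8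
    rw [min_eq_left hR₁₃] at h10
    rw [min_eq_left hR₂₃] at h11
    rw [key R₁ R₂ _ _ _ hR₁₃ hR₂₃ (by linarith [hinv₃])] at h12
    exact ⟨h0a, h0b, h0c, h1, h5, h9,
      lt_min (by linarith) (by linarith),
      lt_min (by linarith) (by linarith),
      lt_min (by linarith) (by linarith),
      lt_min (by linarith) (lt_min (by linarith) (by linarith))⟩
  · rintro ⟨h0a, h0b, h0c, h1, h5, h9, h12, h13, h23, h123⟩
    have hR₁₂ : R₁ ≤ condH μ (fun ω => g₁₂ (X₁ ω)) Q := (h1.trans_le hA₁₂).le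
    have hR₁₃ : R₁ ≤ condH μ (fun ω => g₁₃ (X₁ ω)) Q := (h1.trans_le hA₁₃).le
    have hR₂₁ : R₂ ≤ condH μ (fun ω => g₂₁ (X₂ ω)) Q := (h5.trans_le hA₂₁).le
    have hR₂₃ : R₂ ≤ condH μ (fun ω => g₂₃ (X₂ ω)) Q := (h5.trans_le hA₂₃).le
    have hR₃₁ : R₃ ≤ condH μ (fun ω => g₃₁ (X₃ ω)) Q := (h9.trans_le hA₃₁).le
    have hR₃₂ : R₃ ≤ condH μ (fun ω => g₃₂ (X₃ ω)) Q := (h9.trans_le hA₃₂).le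
    have h12a := h12.trans_le (min_le_left _ _)
    have h12b := h12.trans_le (min_le_right _ _)
    have h13a := h13.trans_le (min_le_left _ _)
    have h13b := h13.trans_le (min_le_right _ _)
    have h23a := h23.trans_le (min_le_left _ _)
    have h23b := h23.trans_le (min_le_right _ _)
    have h123a := h123.trans_le (min_le_left _ _)
    have h123b := h123.trans_le ((min_le_right _ _).trans (min_le_left _ _))
    have h123c := h123.trans_le ((min_le_right _ _).trans (min_le_right _ _))
    refine ⟨h0a, h0b, h0c, h1, ?_, ?_, ?_, h5, ?_, ?_, ?_, h9, ?_, ?_, ?_⟩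
    · rw [min_eq_left hR₂₁]; linarith
    · rw [min_eq_left hR₃₁]; linarith
    · rw [key R₂ R₃ _ _ _ hR₂₁ hR₃₁ hinv₁]; linarith
    · rw [min_eq_left hR₃₂]; linarith
    · rw [min_eq_left hR₁₂]; linarith
    · rw [key R₃ R₁ _ _ _ hR₃₂ hR₁₂ (by linarith [hinv₂])]; linarith
    · rw [min_eq_left hR₁₃]; linarith
    · rw [min_eq_left hR₂₃]; linarith
    · rw [key R₁ R₂ _ _ _ hR₁₃ hR₂₃ (by linarith [hinv₃])]; linarith
end
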